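/- Suppose that b i = 1 (equivalently, a k i = 0 for every k ∈ ⟨i⟩ with k ≠ i) and that j ∉ ⟨i⟩ (so that A i j ≤ 0). Then (ad (E i))^{(1 − A i j).toNat} (E j) = 0, where ad x = ⁅x, ·⁆. -/

import Mathlib

/-!
Since `b i = 1`, the column sums `∑_{k ∈ ⟨i⟩} a k l` equal `2 = a l l` for `l ∈ ⟨i⟩` (they are
constant along σ-cycles), so `a k l = 0` for distinct `k, l ∈ ⟨i⟩`, and the Serre relations
with exponent `1` make the `e k`, `k ∈ ⟨i⟩`, commute. Also `A i j = ∑_{k ∈ ⟨i⟩} a k l` for every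
`l ∈ ⟨j⟩`. Expanding `ad (E i) ^ (1 - A i j) = (∑_{k ∈ ⟨i⟩} ad (e k)) ^ (1 + ∑_k (-a k l))`
multinomially, every monomial contains some `ad (e k)` at least `1 - a k l` times, and hence
kills `e l` by the Serre relation for `(k, l)`.
-/

open scoped Classical

/-- The σ-orbit `⟨i⟩` of an index `i`, as a finite set. -/
noncomputable def sigmaOrbit {n : ℕ} (σ : Equiv.Perm (Fin n)) (i : Fin n) : Finset (Fin n) :=
  Finset.univ.filter fun k => σ.SameCycle i k

/-- `b i = 3 − ∑_{k ∈ ⟨i⟩} a k i`. -/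
noncomputable def bFold {n : ℕ} (a : Fin n → Fin n → ℤ) (σ : Equiv.Perm (Fin n))
    (i : Fin n) : ℤ :=
  3 - ∑ k ∈ sigmaOrbit σ i, a k i

/-- The folded Cartan matrix `A i j = b i · ∑_{k ∈ ⟨i⟩} a k j`. -/
noncomputable def AFold {n : ℕ} (a : Fin n → Fin n → ℤ) (σ : Equiv.Perm (Fin n))
    (i j : Fin n) : ℤ :=
  bFold a σ i * ∑ k ∈ sigmaOrbit σ i, a k j

/-- `E i = ∑_{k ∈ ⟨i⟩} e k`. -/
noncomputable def EFold {n : ℕ} {L : Type*} [LieRing L]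
    (σ : Equiv.Perm (Fin n)) (e : Fin n → L) (i : Fin n) : L :=
  ∑ k ∈ sigmaOrbit σ i, e k

/-- `F i = b i • ∑_{k ∈ ⟨i⟩} f k`. -/
noncomputable def FFold {n : ℕ} {L : Type*} [LieRing L]
    (a : Fin n → Fin n → ℤ) (σ : Equiv.Perm (Fin n)) (f : Fin n → L) (i : Fin n) : L :=
  bFold a σ i • ∑ k ∈ sigmaOrbit σ i, f k

/-- `H i = b i • ∑_{k ∈ ⟨i⟩} h k`. -/
noncomputable def HFold {n : ℕ} {L : Type*} [LieRing L]
    (a : Fin n → Fin n → ℤ) (σ : Equiv.Perm (Fin n)) (h : Fin n → L) (i : Fin n) : L :=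
  bFold a σ i • ∑ k ∈ sigmaOrbit σ i, h k

open Finset

theorem pow_smul_eq_zero_of_le {A M : Type*} [Monoid A] [AddMonoid M] [DistribMulAction A M]
    {x : A} {v : M} {m p : ℕ} (hmp : m ≤ p) (hv : x ^ m • v = 0) : x ^ p • v = 0 := by
  rw [← Nat.sub_add_cancel hmp, pow_add, mul_smul, hv, smul_zero]

/-- Pigeonhole: every word of length `N` in the commuting `x k` contains some `x k` at least
`m k` times. -/
theorem Finset.sum_pow_smul_eq_zero {ι A M : Type*} [Semiring A] [AddCommMonoid M] [Module A M]
    {s : Finset ι} {x : ι → A} (hx : (s : Set ι).Pairwise fun k l ↦ Commute (x k) (x l)) {v : M}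
    {m : ι → ℕ} (hv : ∀ k ∈ s, x k ^ m k • v = 0) {N : ℕ} (hN : ∑ k ∈ s, (m k - 1) < N) :
    (∑ k ∈ s, x k) ^ N • v = 0 := by
  classical
  induction s using Finset.induction_on generalizing N with
  | empty => rw [sum_empty, zero_pow (by omega), zero_smul]
  | insert k t hk ih =>
    rw [sum_insert hk] at hN ⊢
    have hcomm : Commute (x k) (∑ l ∈ t, x l) :=
      Commute.sum_right _ _ _ fun l hl ↦
        hx (mem_insert_self k t) (mem_insert_of_mem hl) (ne_of_mem_of_not_mem hl hk).symm
    rw [hcomm.add_pow', sum_smul]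
    refine sum_eq_zero fun ⟨p, q⟩ hpq ↦ ?_
    rw [HasAntidiagonal.mem_antidiagonal] at hpq
    rw [smul_assoc, mul_smul]
    by_cases hp : m k ≤ p
    · rw [← mul_smul, (hcomm.pow_pow p q).eq, mul_smul,
        pow_smul_eq_zero_of_le hp (hv k (mem_insert_self k t)), smul_zero, smul_zero]
    · rw [ih (hx.mono (by simp)) (fun l hl ↦ hv l (mem_insert_of_mem hl)) (by omega),
        smul_zero, smul_zero]

theorem Finset.eq_zero_of_sum_eq_of_nonpos {ι M : Type*} [AddCommGroup M] [PartialOrder M]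
    [IsOrderedAddMonoid M] {s : Finset ι} {x : ι → M} {l : ι} (hl : l ∈ s)
    (hsum : ∑ k ∈ s, x k = x l) (hx : ∀ k ∈ s, k ≠ l → x k ≤ 0) {k : ι} (hk : k ∈ s)
    (hkl : k ≠ l) : x k = 0 := by
  have hrest : ∑ k ∈ s.erase l, x k = 0 := by
    rw [← add_sum_erase s x hl] at hsum
    exact left_eq_add.mp hsum.symm
  exact (sum_eq_zero_iff_of_nonpos fun k hk ↦ hx k (mem_of_mem_erase hk) (ne_of_mem_erase hk)).mp
    hrest k (mem_erase.mpr ⟨hkl, hk⟩)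

theorem Equiv.Perm.SameCycle.apply_eq_of_apply_perm {α β : Type*} {σ : Equiv.Perm α}
    {g : α → β} (hg : ∀ x, g (σ x) = g x) {x y : α} (h : σ.SameCycle x y) : g x = g y := by
  obtain ⟨m, rfl⟩ := h
  induction m using Int.induction_on generalizing x with
  | zero => rfl
  | succ k ih => rw [zpow_add_one, Perm.mul_apply, ← ih, hg]
  | pred k ih =>
    rw [zpow_sub_one, Perm.mul_apply, ← ih, ← hg (σ⁻¹ x), Perm.coe_inv, Equiv.apply_symm_apply]

namespace LieAlgebra

attribute [local instance 100] LieRing.ofAssociativeRing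

variable {K L : Type*} [CommRing K] [LieRing L] [LieAlgebra K L]

theorem commute_ad_of_lie_eq_zero {x y : L} (h : ⁅x, y⁆ = 0) :
    Commute (ad K L x) (ad K L y) := by
  rw [commute_iff_lie_eq, ← LieHom.map_lie, h, map_zero]

theorem ad_sum_pow_apply_eq_zero {ι : Type*} {a : ι → ι → ℤ} (hoff : ∀ i j, i ≠ j → a i j ≤ 0)
    {e : ι → L} (hSerre : ∀ i j, i ≠ j → (ad K L (e i) ^ (1 - a i j).toNat) (e j) = 0)
    {s : Finset ι} (hs : (s : Set ι).Pairwise fun k k' ↦ ⁅e k, e k'⁆ = 0) {l : ι} (hl : l ∉ s) :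
    (ad K L (∑ k ∈ s, e k) ^ (1 - ∑ k ∈ s, a k l).toNat) (e l) = 0 := by
  have hexp : ((∑ k ∈ s, ((1 - a k l).toNat - 1) : ℕ) : ℤ) = -∑ k ∈ s, a k l := by
    rw [Nat.cast_sum, ← sum_neg_distrib]
    refine sum_congr rfl fun k hk ↦ ?_
    have := hoff k l (ne_of_mem_of_not_mem hk hl)
    omega
  have hnonpos : ∑ k ∈ s, a k l ≤ 0 := sum_nonpos fun k hk ↦ hoff k l (ne_of_mem_of_not_mem hk hl)
  rw [map_sum, ← Module.End.smul_def]
  exact sum_pow_smul_eq_zero (m := fun k ↦ (1 - a k l).toNat)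
    (fun k _ k' _ hkk' ↦ commute_ad_of_lie_eq_zero (hs ‹_› ‹_› hkk'))
    (fun k hk ↦ hSerre k l (ne_of_mem_of_not_mem hk hl)) (by omega)

end LieAlgebra

section FoldedCartan

variable {n : ℕ} {a : Fin n → Fin n → ℤ} {σ : Equiv.Perm (Fin n)}

theorem mem_sigmaOrbit {i k : Fin n} : k ∈ sigmaOrbit σ i ↔ σ.SameCycle i k := by
  simp [sigmaOrbit]

theorem sum_sigmaOrbit_apply_perm (hσ : ∀ i j, a (σ i) (σ j) = a i j) (i l : Fin n) :
    ∑ k ∈ sigmaOrbit σ i, a k (σ l) = ∑ k ∈ sigmaOrbit σ i, a k l :=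
  (sum_equiv σ (fun k ↦ by simp [mem_sigmaOrbit]) fun k _ ↦ (hσ k l).symm).symm

theorem sum_sigmaOrbit_eq_of_sameCycle (hσ : ∀ i j, a (σ i) (σ j) = a i j) (i : Fin n)
    {j l : Fin n} (h : σ.SameCycle j l) :
    ∑ k ∈ sigmaOrbit σ i, a k j = ∑ k ∈ sigmaOrbit σ i, a k l :=
  h.apply_eq_of_apply_perm (g := fun l ↦ ∑ k ∈ sigmaOrbit σ i, a k l)
    (sum_sigmaOrbit_apply_perm hσ i)

theorem cartan_eq_zero_of_mem_sigmaOrbit (hdiag : ∀ i, a i i = 2)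
    (hoff : ∀ i j, i ≠ j → a i j ≤ 0) (hσ : ∀ i j, a (σ i) (σ j) = a i j) {i : Fin n}
    (hb : bFold a σ i = 1) {k l : Fin n} (hk : k ∈ sigmaOrbit σ i) (hl : l ∈ sigmaOrbit σ i)
    (hkl : k ≠ l) : a k l = 0 := by
  have hcol : ∑ k ∈ sigmaOrbit σ i, a k l = a l l := by
    rw [← sum_sigmaOrbit_eq_of_sameCycle hσ i (mem_sigmaOrbit.mp hl), hdiag]
    unfold bFold at hb
    omega
  exact eq_zero_of_sum_eq_of_nonpos (x := (a · l)) hl hcol (fun k _ ↦ hoff k l) hk hkl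

end FoldedCartan

theorem folded_serre_E_of_b_eq_one_general {K L : Type*} [Field K] [LieRing L] [LieAlgebra K L]
    {n : ℕ}
    (a : Fin n → Fin n → ℤ)
    (hdiag : ∀ i, a i i = 2)
    (hoff : ∀ i j, i ≠ j → a i j ≤ 0)
    (e : Fin n → L)
    (σ : Equiv.Perm (Fin n))
    (hσ : ∀ i j, a (σ i) (σ j) = a i j)
    (hSerreE : ∀ i j, i ≠ j →
      ((LieAlgebra.ad K L (e i)) ^ (1 - a i j).toNat) (e j) = 0)
    (i j : Fin n)
    (hb : bFold a σ i = 1)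
    (hj : j ∉ sigmaOrbit σ i) :
    ((LieAlgebra.ad K L (EFold σ e i)) ^ (1 - AFold a σ i j).toNat) (EFold σ e j) = 0 := by
  have hcomm : (sigmaOrbit σ i : Set (Fin n)).Pairwise fun k l ↦ ⁅e k, e l⁆ = 0 :=
    fun k hk l hl hkl ↦ by
      simpa [cartan_eq_zero_of_mem_sigmaOrbit hdiag hoff hσ hb hk hl hkl] using hSerreE k l hkl
  rw [AFold, hb, one_mul]
  unfold EFold
  rw [map_sum]
  refine sum_eq_zero fun l hl ↦ ?_
  have hjl : σ.SameCycle j l := mem_sigmaOrbit.mp hl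
  have hl_not_mem : l ∉ sigmaOrbit σ i :=
    fun hil ↦ hj (mem_sigmaOrbit.mpr ((mem_sigmaOrbit.mp hil).trans hjl.symm))
  rw [sum_sigmaOrbit_eq_of_sameCycle hσ i hjl]
  exact LieAlgebra.ad_sum_pow_apply_eq_zero hoff hSerreE hcomm hl_not_mem

theorem folded_serre_E_of_b_eq_one {K L : Type*} [Field K] [CharZero K] [LieRing L] [LieAlgebra K L]
    {n : ℕ} (hn : 1 ≤ n)
    (a : Fin n → Fin n → ℤ)
    (hdiag : ∀ i, a i i = 2)
    (hoff : ∀ i j, i ≠ j → a i j ≤ 0)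
    (e f h : Fin n → L)
    (hhh : ∀ i j, ⁅h i, h j⁆ = 0)
    (hef : ∀ i, ⁅e i, f i⁆ = h i)
    (hef' : ∀ i j, i ≠ j → ⁅e i, f j⁆ = 0)
    (hhe : ∀ i j, ⁅h i, e j⁆ = a i j • e j)
    (hhf : ∀ i j, ⁅h i, f j⁆ = (-(a i j)) • f j)
    (σ : Equiv.Perm (Fin n))
    (hσ : ∀ i j, a (σ i) (σ j) = a i j)
    (hSerreE : ∀ i j, i ≠ j →
      ((LieAlgebra.ad K L (e i)) ^ (1 - a i j).toNat) (e j) = 0)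
    (hSerreF : ∀ i j, i ≠ j →
      ((LieAlgebra.ad K L (f i)) ^ (1 - a i j).toNat) (f j) = 0)
    (i j : Fin n)
    (hb : bFold a σ i = 1)
    (hj : j ∉ sigmaOrbit σ i) :
    ((LieAlgebra.ad K L (EFold σ e i)) ^ (1 - AFold a σ i j).toNat) (EFold σ e j) = 0 :=
  folded_serre_E_of_b_eq_one_general a hdiag hoff e σ hσ hSerreE i j hb hj
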